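/- arXiv:1308.6048 — 4 statements merged into one kernel-verified Lean document; each statement's English description precedes it below -/
import Mathlib

section
/- Let $I \subseteq \mathfrak{p}$ be an ideal and prime of a Noetherian ring $R$, and let $S$ be a multiplicatively closed subset of $R$ disjoint from $\mathfrak{p}$. Then $\mathfrak{p} \in \overline{Q^*}(I)$ if and only if $\mathfrak{p} R_S \in \overline{Q^*}(I R_S)$. -/
open IsLocalRing

noncomputable section

/-- The completion of a local ring at its maximal ideal. -/
abbrev Cmpl (A : Type*) [CommRing A] [IsLocalRing A] : Type _ :=
  AdicCompletion (maximalIdeal A) A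

variable (R : Type*) [CommRing R]

/-- `p` is a quintasymptotic prime of `I`: there is a minimal prime `z` of the completion
`(R_p)^*` of the localization at `p` such that `Rad (I (R_p)^* + z) = p (R_p)^*`. -/
def IsQStar (I p : Ideal R) [p.IsPrime] : Prop :=
  I ≤ p ∧ ∃ z ∈ minimalPrimes (Cmpl (Localization.AtPrime p)),
    (Ideal.map (algebraMap (Localization.AtPrime p) (Cmpl (Localization.AtPrime p)))
        (Ideal.map (algebraMap R (Localization.AtPrime p)) I) ⊔ z).radical =
      Ideal.map (algebraMap (Localization.AtPrime p) (Cmpl (Localization.AtPrime p)))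
        (maximalIdeal (Localization.AtPrime p))

/-- The set `Q̄*(I)` of quintasymptotic primes of `I`. -/
def QStarSet (I : Ideal R) : Set (Ideal R) :=
  {p | ∃ h : p.IsPrime, letI := h; IsQStar R I p}

/-- `xs` is a quintasymptotic sequence over `I`. -/
def IsQASeq (I : Ideal R) (xs : List R) : Prop :=
  I ⊔ Ideal.span {a | a ∈ xs} ≠ ⊤ ∧
  ∀ i : Fin xs.length, ∀ p ∈ QStarSet R (I ⊔ Ideal.span {a | a ∈ xs.take i}), xs.get i ∉ p

/-- `xs` is a maximal quintasymptotic sequence over `I`. -/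
def IsMaxQASeq (I : Ideal R) (xs : List R) : Prop :=
  IsQASeq R I xs ∧ ∀ y : R, ¬ IsQASeq R I (xs ++ [y])

/-- The quintasymptotic cograde of an ideal of a local ring. -/
def qacogd [IsLocalRing R] (I : Ideal R) : WithBot ℕ∞ :=
  ⨅ z ∈ minimalPrimes (Cmpl R),
    ringKrullDim ((Cmpl R) ⧸ (Ideal.map (algebraMap R (Cmpl R)) I ⊔ z))

/-- The height of an ideal. -/
def idealHeight (I : Ideal R) : WithBot ℕ∞ :=
  ⨅ p, ⨅ h : p ∈ I.minimalPrimes,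
    letI : p.IsPrime := h.1.1
    ringKrullDim (Localization.AtPrime p)

end

/-!
Since `S` misses `𝔭`, the localization `(R_S)_{𝔭R_S}` is `R_𝔭` as an `R`-algebra, and `I R_S`
becomes `I R_𝔭` there. A ring isomorphism of local rings induces an isomorphism of their
completions compatible with the canonical maps, and such an isomorphism carries minimal primes to
minimal primes and commutes with sums and radicals, so the defining condition of `Q̄*` is the
same on both sides.
-/

theorem Ideal.pow_le_comap_pow_of_map_le {A B : Type*} [CommRing A] [CommRing B] {φ : A →+* B}
    {I : Ideal A} {J : Ideal B} (h : I.map φ ≤ J) (n : ℕ) : I ^ n ≤ (J ^ n).comap φ :=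
  Ideal.map_le_iff_le_comap.1 ((Ideal.map_pow φ I n).trans_le (Ideal.pow_right_mono h n))

namespace AdicCompletion

variable {A B : Type*} [CommRing A] [CommRing B]

theorem factorPow_evalₐ (I : Ideal A) {m n : ℕ} (hle : m ≤ n) (x : AdicCompletion I A) :
    Ideal.Quotient.factorPow I hle (evalₐ I n x) = evalₐ I m x := by
  have h : ∀ k, I ^ k • (⊤ : Ideal A) ≤ I ^ k := fun k ↦ le_of_eq (Ideal.mul_top _)
  rw [← factor_eval_eq_evalₐ I x (h n), ← factor_eval_eq_evalₐ I x (h m), eval_apply, eval_apply,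
    ← x.prop hle]
  obtain ⟨a, ha⟩ := Ideal.Quotient.mk_surjective (x.val n)
  rw [← ha]
  rfl

variable {I : Ideal A} {J : Ideal B} {φ : A →+* B}

theorem factorPow_comp_quotientMap_comp_evalₐ (h : I.map φ ≤ J) {m n : ℕ} (hle : m ≤ n) :
    (Ideal.Quotient.factorPow J hle).comp
        ((Ideal.quotientMap (J ^ n) φ (Ideal.pow_le_comap_pow_of_map_le h n)).comp
          (evalₐ I n : AdicCompletion I A →+* A ⧸ I ^ n)) =
      (Ideal.quotientMap (J ^ m) φ (Ideal.pow_le_comap_pow_of_map_le h m)).comp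
        (evalₐ I m : AdicCompletion I A →+* A ⧸ I ^ m) :=
  RingHom.ext fun x ↦ by
    simp only [RingHom.comp_apply, RingHom.coe_coe]
    rw [← factorPow_evalₐ I hle x]
    obtain ⟨a, ha⟩ := Ideal.Quotient.mk_surjective (evalₐ I n x)
    rw [← ha]
    rfl

variable (φ) in
noncomputable def mapRingHom (h : I.map φ ≤ J) : AdicCompletion I A →+* AdicCompletion J B :=
  liftRingHom J _ (factorPow_comp_quotientMap_comp_evalₐ h)

theorem evalₐ_mapRingHom (h : I.map φ ≤ J) (n : ℕ) (x : AdicCompletion I A) :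
    evalₐ J n (mapRingHom φ h x) =
      Ideal.quotientMap (J ^ n) φ (Ideal.pow_le_comap_pow_of_map_le h n) (evalₐ I n x) :=
  evalₐ_liftRingHom J _ (factorPow_comp_quotientMap_comp_evalₐ h) n x

theorem mapRingHom_algebraMap (h : I.map φ ≤ J) (a : A) :
    mapRingHom φ h (algebraMap A _ a) = algebraMap B _ (φ a) :=
  ext_evalₐ fun n ↦ by simp [evalₐ_mapRingHom, algebraMap_apply]

theorem mapRingHom_mapRingHom_of_leftInverse {ψ : B →+* A} (hψφ : Function.LeftInverse ψ φ)
    (h : I.map φ ≤ J) (h' : J.map ψ ≤ I) (x : AdicCompletion I A) :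
    mapRingHom ψ h' (mapRingHom φ h x) = x :=
  ext_evalₐ fun n ↦ by
    obtain ⟨a, ha⟩ := Ideal.Quotient.mk_surjective (evalₐ I n x)
    simp [evalₐ_mapRingHom, ← ha, hψφ a]

noncomputable def congrRingEquiv (e : A ≃+* B) (h : I.map (e : A →+* B) = J) :
    AdicCompletion I A ≃+* AdicCompletion J B :=
  have h' : J.map (e.symm : B →+* A) = I := by rw [← h]; exact Ideal.map_of_equiv e
  RingEquiv.ofRingHom (mapRingHom e h.le) (mapRingHom e.symm h'.le)
    (RingHom.ext <| mapRingHom_mapRingHom_of_leftInverse (φ := (e.symm : B →+* A))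
      (ψ := (e : A →+* B)) e.apply_symm_apply h'.le h.le)
    (RingHom.ext <| mapRingHom_mapRingHom_of_leftInverse (φ := (e : A →+* B))
      (ψ := (e.symm : B →+* A)) e.symm_apply_apply h.le h'.le)

theorem congrRingEquiv_comp_algebraMap (e : A ≃+* B) (h : I.map (e : A →+* B) = J) :
    (congrRingEquiv e h : AdicCompletion I A →+* AdicCompletion J B).comp (algebraMap A _) =
      (algebraMap B _).comp (e : A →+* B) :=
  RingHom.ext fun a ↦ mapRingHom_algebraMap h.le a

end AdicCompletion

section RingEquiv

variable {C D : Type*} [CommRing C] [CommRing D] (F : C ≃+* D)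

theorem Ideal.map_ringEquiv_mem_minimalPrimes {z : Ideal C} (hz : z ∈ minimalPrimes C) :
    z.map (F : C →+* D) ∈ minimalPrimes D := by
  have hcomap :=
    Ideal.minimalPrimes_comap_of_surjective (f := (F.symm : D →+* C)) F.symm.surjective hz
  rw [Ideal.comap_bot_of_injective (F.symm : D →+* C) F.symm.injective] at hcomap
  rwa [Ideal.map_comap_of_equiv]

theorem Ideal.map_ringEquiv_radical (L : Ideal C) :
    L.radical.map (F : C →+* D) = (L.map (F : C →+* D)).radical := by
  rw [Ideal.map_comap_of_equiv, Ideal.map_comap_of_equiv, Ideal.comap_radical]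

end RingEquiv

def IsQStarLocal (A : Type*) [CommRing A] [IsLocalRing A] (K : Ideal A) : Prop :=
  ∃ z ∈ minimalPrimes (Cmpl A),
    (K.map (algebraMap A (Cmpl A)) ⊔ z).radical = (maximalIdeal A).map (algebraMap A (Cmpl A))

theorem isQStar_iff {R : Type*} [CommRing R] (I p : Ideal R) [p.IsPrime] :
    IsQStar R I p ↔
      I ≤ p ∧ IsQStarLocal (Localization.AtPrime p) (I.map (algebraMap R _)) :=
  Iff.rfl

theorem mem_QStarSet_iff {R : Type*} [CommRing R] (I p : Ideal R) [hp : p.IsPrime] :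
    p ∈ QStarSet R I ↔ IsQStar R I p :=
  ⟨fun ⟨_, h⟩ ↦ h, fun h ↦ ⟨hp, h⟩⟩

section IsQStarLocal

variable {A B : Type*} [CommRing A] [CommRing B] [IsLocalRing A] [IsLocalRing B]

theorem IsQStarLocal.map_ringEquiv (e : A ≃+* B) {K : Ideal A} (hK : IsQStarLocal A K) :
    IsQStarLocal B (K.map (e : A →+* B)) := by
  obtain ⟨z, hz, hrad⟩ := hK
  let F := AdicCompletion.congrRingEquiv e (map_maximalIdeal_of_surjective _ e.surjective)
  have hF (L : Ideal A) : (L.map (algebraMap A (Cmpl A))).map (F : Cmpl A →+* Cmpl B) =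
      (L.map (e : A →+* B)).map (algebraMap B (Cmpl B)) := by
    rw [Ideal.map_map, Ideal.map_map, AdicCompletion.congrRingEquiv_comp_algebraMap]
  refine ⟨z.map (F : Cmpl A →+* Cmpl B), Ideal.map_ringEquiv_mem_minimalPrimes F hz, ?_⟩
  rw [← hF, ← Ideal.map_sup, ← Ideal.map_ringEquiv_radical, hrad, hF,
    map_maximalIdeal_of_surjective _ e.surjective]

theorem isQStarLocal_map_ringEquiv_iff (e : A ≃+* B) {K : Ideal A} :
    IsQStarLocal B (K.map (e : A →+* B)) ↔ IsQStarLocal A K := by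
  refine ⟨fun h ↦ ?_, IsQStarLocal.map_ringEquiv e⟩
  simpa only [Ideal.map_of_equiv] using h.map_ringEquiv e.symm

end IsQStarLocal

theorem comap_mem_QStarSet_iff {R : Type*} [CommRing R] (S : Submonoid R) (I : Ideal R)
    (q : Ideal (Localization S)) [q.IsPrime] :
    q.comap (algebraMap R (Localization S)) ∈ QStarSet R I ↔
      q ∈ QStarSet (Localization S) (I.map (algebraMap R (Localization S))) := by
  let Rq := Localization.AtPrime (q.comap (algebraMap R (Localization S)))
  let e : Rq ≃ₐ[R] Localization.AtPrime q :=
    IsLocalization.localizationLocalizationAtPrimeIsoLocalization S q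
  have hI : (I.map (algebraMap R Rq)).map (e.toRingEquiv : Rq →+* Localization.AtPrime q) =
      (I.map (algebraMap R (Localization S))).map (algebraMap _ (Localization.AtPrime q)) := by
    rw [Ideal.map_map, Ideal.map_map, ← IsScalarTower.algebraMap_eq]
    exact congrArg (Ideal.map · I) (RingHom.ext e.commutes)
  rw [mem_QStarSet_iff, mem_QStarSet_iff, isQStar_iff, isQStar_iff, ← Ideal.map_le_iff_le_comap,
    ← hI, isQStarLocal_map_ringEquiv_iff]

theorem mem_QStarSet_iff_localization_general (R : Type*) [CommRing R]
    (I p : Ideal R) [p.IsPrime] (S : Submonoid R)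
    (hS : Disjoint (S : Set R) (p : Set R)) :
    p ∈ QStarSet R I ↔
      Ideal.map (algebraMap R (Localization S)) p ∈
        QStarSet (Localization S) (Ideal.map (algebraMap R (Localization S)) I) := by
  have := IsLocalization.isPrime_of_isPrime_disjoint S (Localization S) p ‹_› hS
  have hpq := comap_mem_QStarSet_iff S I (p.map (algebraMap R (Localization S)))
  rwa [← Ideal.under_def, IsLocalization.under_map_of_isPrime_disjoint S _ ‹_› hS] at hpq

/-- `p ∈ Q̄*(I)` iff `p R_S ∈ Q̄*(I R_S)` for `S` disjoint from `p`. -/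
theorem mem_QStarSet_iff_localization (R : Type*) [CommRing R] [IsNoetherianRing R]
    (I p : Ideal R) [p.IsPrime] (hIp : I ≤ p) (S : Submonoid R)
    (hS : Disjoint (S : Set R) (p : Set R)) :
    p ∈ QStarSet R I ↔
      Ideal.map (algebraMap R (Localization S)) p ∈
        QStarSet (Localization S) (Ideal.map (algebraMap R (Localization S)) I) :=
  mem_QStarSet_iff_localization_general R I p S hS
end

section
/- Let $R$ be a Noetherian ring, $I$ an ideal, $z$ a minimal prime of $R$, and $\mathfrak{p}$ a prime minimal over $I + z$. Then $\mathfrak{p} \in \overline{Q^*}(I)$. -/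
open IsLocalRing

/-!
Localizing at `p` turns `z` into a minimal prime `z R_p` with `Rad (I R_p + z R_p)` maximal.
Since `R_p` is Hausdorff for its maximal ideal, `R_p → R_p^*` is injective, so some minimal
prime `z'` of `R_p^*` contracts to `z R_p`. Then `Rad (I R_p^* + z')` contains the image of
`Rad (I R_p + z R_p) = p R_p`, and lies in `p R_p^*`, the maximal ideal of the local ring `R_p^*`.
-/

theorem IsLocalization.map_mem_minimalPrimes_of_disjoint {R A : Type*} [CommSemiring R]
    [CommSemiring A] [Algebra R A] (M : Submonoid R) [IsLocalization M A] {z : Ideal R}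
    (hz : z ∈ minimalPrimes R) (hMz : Disjoint (M : Set R) z) :
    z.map (algebraMap R A) ∈ minimalPrimes A := by
  have h := IsLocalization.minimalPrimes_map M A (⊥ : Ideal R)
  rw [Ideal.map_bot] at h
  change _ ∈ (⊥ : Ideal A).minimalPrimes
  rw [h, Set.mem_preimage, IsLocalization.under_map_of_isPrime_disjoint M A hz.isPrime hMz]
  exact hz

theorem Ideal.exists_minimalPrimes_comap_eq_of_injective {S T : Type*} [CommRing S] [CommRing T]
    {f : S →+* T} (hf : Function.Injective f) {w : Ideal S} (hw : w ∈ minimalPrimes S) :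
    ∃ w' ∈ minimalPrimes T, w'.comap f = w := by
  change w ∈ (⊥ : Ideal S).minimalPrimes at hw
  rw [← Ideal.comap_bot_of_injective f hf] at hw
  exact Ideal.exists_minimalPrimes_comap_eq f w hw

theorem AdicCompletion.algebraMap_injective {S : Type*} [CommRing S] (J : Ideal S)
    [IsHausdorff J S] : Function.Injective (algebraMap S (AdicCompletion J S)) :=
  AdicCompletion.of_injective J S

theorem IsLocalRing.radical_map_sup_eq_maximalIdeal {S T : Type*} [CommRing S] [CommRing T]
    [IsLocalRing S] [IsLocalRing T] {φ : S →+* T}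
    (hφ : (maximalIdeal S).map φ = maximalIdeal T) {J w : Ideal S} {w' : Ideal T} [w'.IsPrime]
    (hw' : w'.comap φ = w) (hJw : (J ⊔ w).radical = maximalIdeal S) :
    (J.map φ ⊔ w').radical = maximalIdeal T := by
  apply le_antisymm
  · rw [(maximalIdeal.isMaximal T).isPrime.radical_le_iff]
    refine sup_le ?_ (le_maximalIdeal Ideal.IsPrime.ne_top')
    rw [← hφ, ← hJw]
    exact Ideal.map_mono (le_sup_left.trans Ideal.le_radical)
  · calc maximalIdeal T = (J ⊔ w).radical.map φ := by rw [hJw, hφ]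
      _ ≤ ((J ⊔ w).map φ).radical := Ideal.map_radical_le φ
      _ ≤ (J.map φ ⊔ w').radical := by
        rw [Ideal.map_sup, ← hw']
        exact Ideal.radical_mono (sup_le_sup_left Ideal.map_comap_le _)

/-- if `z` is a minimal prime of `R` and `p` is minimal over `I + z`, then
`p ∈ Q̄*(I)`. -/
theorem mem_QStarSet_of_minimal_over_sup (R : Type*) [CommRing R] [IsNoetherianRing R]
    (I z p : Ideal R) (hz : z ∈ minimalPrimes R) (hp : p ∈ (I ⊔ z).minimalPrimes) :
    p ∈ QStarSet R I := by
  have := hp.isPrime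
  let S := Localization.AtPrime p
  have : IsNoetherianRing S := IsLocalization.isNoetherianRing p.primeCompl S ‹_›
  have hzp : z ≤ p := le_sup_right.trans hp.le
  have hzS : z.map (algebraMap R S) ∈ minimalPrimes S :=
    IsLocalization.map_mem_minimalPrimes_of_disjoint p.primeCompl hz
      (Set.disjoint_left.mpr fun _ hx hxz ↦ hx (hzp hxz))
  obtain ⟨z', hz', hz'z⟩ := Ideal.exists_minimalPrimes_comap_eq_of_injective
    (AdicCompletion.algebraMap_injective (maximalIdeal S)) hzS
  have := hz'.isPrime
  have hrad : (I.map (algebraMap R S) ⊔ z.map (algebraMap R S)).radical = maximalIdeal S := by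
    rw [← Ideal.map_sup, IsLocalization.AtPrime.radical_map_of_mem_minimalPrimes S p _ hp,
      Localization.AtPrime.map_eq_maximalIdeal]
  refine ⟨‹_›, le_sup_left.trans hp.le, z', hz', ?_⟩
  rw [← AdicCompletion.maximalIdeal_eq_map]
  exact IsLocalRing.radical_map_sup_eq_maximalIdeal AdicCompletion.maximalIdeal_eq_map.symm
    hz'z hrad
end

section
/- Let $R$ be a Noetherian ring, $I$ an ideal, $\mathbf{x} = x_1,\dots,x_n$ elements of $R$, and $m_1,\dots,m_n$ positive integers. Then $x_1,\dots,x_n$ is a quintasymptotic sequence over $I$ if and only if $x_1^{m_1},\dots,x_n^{m_n}$ is a quintasymptotic sequence over $I$. -/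
open IsLocalRing

section Aux
variable {R : Type*} [CommRing R]

lemma radical_sup_congr {A B z : Ideal R} (h : A.radical = B.radical) :
    (A ⊔ z).radical = (B ⊔ z).radical := by
  have key : ∀ A B : Ideal R, A.radical = B.radical → (A ⊔ z).radical ≤ (B ⊔ z).radical := by
    intro A B h
    rw [Ideal.radical_le_radical_iff]
    refine sup_le ?_ (le_trans le_sup_right Ideal.le_radical)
    calc A ≤ A.radical := Ideal.le_radical
    _ = B.radical := h
    _ ≤ (B ⊔ z).radical := Ideal.radical_mono le_sup_left
  exact le_antisymm (key A B h) (key B A h.symm)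

lemma radical_map_congr {S : Type*} [CommRing S] (f : R →+* S) {A B : Ideal R}
    (h : A.radical = B.radical) :
    (Ideal.map f A).radical = (Ideal.map f B).radical := by
  have key : ∀ A B : Ideal R, A.radical = B.radical →
      (Ideal.map f A).radical ≤ (Ideal.map f B).radical := by
    intro A B h
    rw [Ideal.radical_le_radical_iff]
    calc Ideal.map f A ≤ Ideal.map f A.radical := Ideal.map_mono Ideal.le_radical
    _ = Ideal.map f B.radical := by rw [h]
    _ ≤ (Ideal.map f B).radical := Ideal.map_radical_le f
  exact le_antisymm (key A B h) (key B A h.symm)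

lemma qstarset_congr {I J : Ideal R} (h : I.radical = J.radical) :
    QStarSet R I = QStarSet R J := by
  have key : ∀ I J : Ideal R, I.radical = J.radical → QStarSet R I ⊆ QStarSet R J := by
    rintro I J h p ⟨hp, hIp, z, hz, hrad⟩
    refine ⟨hp, hp.radical_le_iff.mp (h ▸ hp.radical_le_iff.mpr hIp), z, hz, ?_⟩
    rw [← hrad]
    exact (radical_sup_congr (radical_map_congr _ (radical_map_congr _ h))).symm
  exact Set.Subset.antisymm (key I J h) (key J I h.symm)

lemma take_pow_radical_congr (I : Ideal R) {n : ℕ} (x : Fin n → R) (m : Fin n → ℕ)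
    (hm : ∀ i, 0 < m i) (k : ℕ) :
    (I ⊔ Ideal.span {a | a ∈ (List.ofFn x).take k}).radical =
      (I ⊔ Ideal.span {a | a ∈ (List.ofFn fun i => x i ^ m i).take k}).radical := by
  have mem_iff : ∀ (f : Fin n → R) (a : R),
      a ∈ {a | a ∈ (List.ofFn f).take k} ↔ ∃ i : Fin n, i.val < k ∧ f i = a := by
    intro f a
    simp only [Set.mem_setOf_eq, List.mem_take_iff_getElem]
    constructor
    · rintro ⟨i, hi, rfl⟩
      rw [List.getElem_ofFn]
      exact ⟨⟨i, by simpa [List.length_ofFn] using (lt_of_lt_of_le hi inf_le_right)⟩,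
        lt_of_lt_of_le hi inf_le_left, rfl⟩
    · rintro ⟨i, hik, rfl⟩
      refine ⟨i.val, by simp [hik, i.isLt], ?_⟩
      rw [List.getElem_ofFn]
  have key : ∀ (f g : Fin n → R),
      (∀ i : Fin n, i.val < k →
        f i ∈ (I ⊔ Ideal.span {a | a ∈ (List.ofFn g).take k}).radical) →
      (I ⊔ Ideal.span {a | a ∈ (List.ofFn f).take k}).radical ≤
        (I ⊔ Ideal.span {a | a ∈ (List.ofFn g).take k}).radical := by
    intro f g hfg
    rw [Ideal.radical_le_radical_iff]
    refine sup_le (le_trans le_sup_left Ideal.le_radical) ?_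
    rw [Ideal.span_le]
    intro a ha
    obtain ⟨i, hik, rfl⟩ := (mem_iff f a).mp ha
    exact hfg i hik
  apply le_antisymm
  · refine key _ _ fun i hik => ?_
    have : x i ^ m i ∈ Ideal.span {a | a ∈ (List.ofFn fun i => x i ^ m i).take k} :=
      Ideal.subset_span ((mem_iff _ _).mpr ⟨i, hik, rfl⟩)
    exact ⟨m i, le_sup_right (α := Ideal R) this⟩
  · refine key _ _ fun i hik => ?_
    have : x i ∈ Ideal.span {a | a ∈ (List.ofFn x).take k} :=
      Ideal.subset_span ((mem_iff _ _).mpr ⟨i, hik, rfl⟩)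
    exact Ideal.le_radical (le_sup_right (α := Ideal R)
      (Ideal.pow_mem_of_mem _ this _ (hm i)))

end Aux

/-- `x₁, …, xₙ` is a quintasymptotic sequence over `I` iff
`x₁^{m₁}, …, xₙ^{mₙ}` is, for positive integers `mᵢ`. -/
theorem isQASeq_pow_iff (R : Type*) [CommRing R] [IsNoetherianRing R]
    (I : Ideal R) (n : ℕ) (x : Fin n → R) (m : Fin n → ℕ) (hm : ∀ i, 0 < m i) :
    IsQASeq R I (List.ofFn x) ↔ IsQASeq R I (List.ofFn fun i => x i ^ m i) := by
  have hrad := take_pow_radical_congr I x m hm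
  have htop : I ⊔ Ideal.span {a | a ∈ List.ofFn x} = ⊤ ↔
      I ⊔ Ideal.span {a | a ∈ List.ofFn fun i => x i ^ m i} = ⊤ := by
    have h := hrad n
    rw [List.take_of_length_le (by simp), List.take_of_length_le (by simp)] at h
    rw [← Ideal.radical_eq_top, h, Ideal.radical_eq_top]
  have hq : ∀ k : ℕ, QStarSet R (I ⊔ Ideal.span {a | a ∈ (List.ofFn x).take k}) =
      QStarSet R (I ⊔ Ideal.span {a | a ∈ (List.ofFn fun i => x i ^ m i).take k}) :=
    fun k => qstarset_congr (hrad k)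
  constructor
  · rintro ⟨h1, h2⟩
    refine ⟨fun h => h1 (htop.mpr h), fun i p hp hmem => ?_⟩
    obtain ⟨hpp, -⟩ := id hp
    set j : Fin (List.ofFn x).length := Fin.cast (by simp) i with hj
    have hji : (j : ℕ) = (i : ℕ) := rfl
    have := h2 j p (by rw [hq (j : ℕ)]; rw [hji]; exact hp)
    apply this
    rw [List.get_ofFn] at hmem ⊢
    exact (hpp.pow_mem_iff_mem _ (hm _)).mp hmem
  · rintro ⟨h1, h2⟩
    refine ⟨fun h => h1 (htop.mp h), fun i p hp hmem => ?_⟩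
    obtain ⟨hpp, -⟩ := id hp
    set j : Fin (List.ofFn fun i => x i ^ m i).length := Fin.cast (by simp) i with hj
    have hji : (j : ℕ) = (i : ℕ) := rfl
    have := h2 j p (by rw [← hq (j : ℕ)]; rw [hji]; exact hp)
    apply this
    rw [List.get_ofFn] at hmem ⊢
    exact (hpp.pow_mem_iff_mem _ (hm _)).mpr hmem
end

section
/- Let $(R,\mathfrak{m})$ be a Noetherian local ring and $I$ an ideal. Then $\mathrm{qacogd}(I) = \min\{\mathrm{qacogd}((I+z)/z) \mid z \text{ a minimal prime of } R\}$. -/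
open IsLocalRing

/-!
Completion is exact on finite modules over a Noetherian ring, so the completion of `R ⧸ z` is
`R^* ⧸ zR^*`; hence `qacogd ((I + z) / z)` is the minimum of `dim R^* / (IR^* + w)` over the
primes `w` minimal over `zR^*`. As `R^*` is flat over `R`, going down shows that these primes,
for `z` running through the minimal primes of `R`, are exactly the minimal primes of `R^*`.
-/

theorem minimalPrimes_eq_iUnion_minimalPrimes_map (A B : Type*) [CommRing A] [CommRing B]
    [Algebra A B] [Algebra.HasGoingDown A B] :
    minimalPrimes B = ⋃ z ∈ minimalPrimes A, (z.map (algebraMap A B)).minimalPrimes := by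
  ext w
  simp only [Set.mem_iUnion, exists_prop]
  constructor
  · intro hw
    have := hw.1.1
    obtain ⟨z, hz, hzw⟩ := Ideal.exists_minimalPrimes_le (J := w.comap (algebraMap A B)) bot_le
    exact ⟨z, hz, ⟨hw.1.1, Ideal.map_le_iff_le_comap.mpr hzw⟩,
      fun v hv hvw => hw.2 ⟨hv.1, bot_le⟩ hvw⟩
  · rintro ⟨z, hz, hw⟩
    have := hz.1.1
    have := hw.1.1
    -- Going down produces a prime `P ≤ w` over `z`; minimality of `w` over `zB` forces `P = w`.
    obtain ⟨P, hPw, hP, hPz⟩ := Ideal.exists_ideal_le_liesOver_of_le (p := z) (q := w.under A) w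
      (Ideal.map_le_iff_le_comap.mp hw.1.2)
    have hwz : w.under A = z := by
      rw [(hw.2 ⟨hP, Ideal.map_le_iff_le_comap.mpr hPz.over.le⟩ hPw).antisymm hPw, ← hPz.over]
    refine ⟨⟨hw.1.1, bot_le⟩, fun v hv hvw => hw.2 ⟨hv.1, ?_⟩ hvw⟩
    have := hv.1
    rw [Ideal.map_le_iff_le_comap]
    exact hz.2 ⟨Ideal.comap_isPrime _ v, bot_le⟩ (hwz ▸ Ideal.comap_mono hvw)

theorem Ideal.comap_map_sup_of_surjective {A B : Type*} [CommRing A] [CommRing B] {f : A →+* B}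
    (hf : Function.Surjective f) (J : Ideal A) (K : Ideal B) :
    (J.map f ⊔ K).comap f = J ⊔ K.comap f := by
  conv_lhs => rw [← Ideal.map_comap_of_surjective f hf K, ← Ideal.map_sup,
    Ideal.comap_map_of_surjective f hf]
  exact sup_eq_left.mpr (le_sup_of_le_right (Ideal.comap_mono bot_le))

theorem ringKrullDim_quotient_comap_of_surjective {A B : Type*} [CommRing A] [CommRing B]
    {f : A →+* B} (hf : Function.Surjective f) (K : Ideal B) :
    ringKrullDim (A ⧸ K.comap f) = ringKrullDim (B ⧸ K) := by
  have hker : RingHom.ker ((Ideal.Quotient.mk K).comp f) = K.comap f := by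
    rw [← RingHom.comap_ker, Ideal.mk_ker]
  rw [← hker]
  exact ringKrullDim_eq_of_ringEquiv
    (RingHom.quotientKerEquivOfSurjective (Ideal.Quotient.mk_surjective.comp hf))

namespace AdicCompletion

section ChangeOfRings

variable {R S M : Type*} [CommRing R] [CommRing S] [Algebra R S] [AddCommGroup M] [Module R M]
  [Module S M] [IsScalarTower R S M] {I : Ideal R} {J : Ideal S}

theorem pow_smul_top_eq_restrictScalars (h : I.map (algebraMap R S) = J) (n : ℕ) :
    (I ^ n • ⊤ : Submodule R M) = (J ^ n • ⊤ : Submodule S M).restrictScalars R := by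
  rw [← h, ← Ideal.map_pow, Submodule.restrictScalars_map_smul_eq,
    Submodule.restrictScalars_top]

noncomputable def levelEquivOfMapEq (h : I.map (algebraMap R S) = J) (n : ℕ) :
    (M ⧸ (I ^ n • ⊤ : Submodule R M)) ≃ₗ[R] M ⧸ (J ^ n • ⊤ : Submodule S M) :=
  (Submodule.quotEquivOfEq _ _ (pow_smul_top_eq_restrictScalars h n)).trans
    (Submodule.Quotient.restrictScalarsEquiv R _)

theorem transitionMap_levelEquivOfMapEq (h : I.map (algebraMap R S) = J) {m n : ℕ}
    (hmn : m ≤ n) (x : M ⧸ (I ^ n • ⊤ : Submodule R M)) :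
    transitionMap J M hmn (levelEquivOfMapEq h n x) =
      levelEquivOfMapEq h m (transitionMap I M hmn x) := by
  obtain ⟨a, rfl⟩ := Submodule.Quotient.mk_surjective _ x
  rfl

theorem transitionMap_levelEquivOfMapEq_symm (h : I.map (algebraMap R S) = J) {m n : ℕ}
    (hmn : m ≤ n) (y : M ⧸ (J ^ n • ⊤ : Submodule S M)) :
    transitionMap I M hmn ((levelEquivOfMapEq h n).symm y) =
      (levelEquivOfMapEq h m).symm (transitionMap J M hmn y) := by
  obtain ⟨a, rfl⟩ := Submodule.Quotient.mk_surjective _ y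
  rfl

noncomputable def equivOfMapEq (h : I.map (algebraMap R S) = J) :
    AdicCompletion I M ≃ₗ[R] AdicCompletion J M where
  toFun x := ⟨fun n => levelEquivOfMapEq h n (x.val n), fun hmn => by
    rw [transitionMap_levelEquivOfMapEq]
    exact congrArg _ (x.property hmn)⟩
  invFun y := ⟨fun n => (levelEquivOfMapEq h n).symm (y.val n), fun hmn =>
    (transitionMap_levelEquivOfMapEq_symm h hmn _).trans (congrArg _ (y.property hmn))⟩
  map_add' x y := ext fun n => (levelEquivOfMapEq h n).map_add (x.val n) (y.val n)
  map_smul' r x := ext fun n => (levelEquivOfMapEq h n).map_smul r (x.val n)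
  left_inv x := ext fun n => (levelEquivOfMapEq h n).symm_apply_apply _
  right_inv y := ext fun n => (levelEquivOfMapEq h n).apply_symm_apply _

end ChangeOfRings

theorem mem_map_algebraMap_of_map_mkQ_eq_zero {R : Type*} [CommRing R] [IsNoetherianRing R]
    (I J : Ideal R) {x : AdicCompletion I R} (hx : map I J.mkQ x = 0) :
    x ∈ J.map (algebraMap R (AdicCompletion I R)) := by
  obtain ⟨y, rfl⟩ := (map_exact (I := I) J.injective_subtype (LinearMap.exact_subtype_mkQ J)
    J.mkQ_surjective x).mp hx
  clear hx
  obtain ⟨t, rfl⟩ := ofTensorProduct_surjective_of_finite I J y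
  rw [← LinearMap.comp_apply, ofTensorProduct_naturality, LinearMap.comp_apply]
  induction t using TensorProduct.induction_on with
  | zero => simp
  | tmul c a =>
    rw [TensorProduct.AlgebraTensorModule.map_tmul, ofTensorProduct_tmul]
    exact Ideal.mul_mem_left _ _ (Ideal.mem_map_of_mem _ a.2)
  | add t₁ t₂ h₁ h₂ =>
    rw [map_add, map_add]
    exact Ideal.add_mem _ h₁ h₂

end AdicCompletion

namespace Cmpl

variable {R : Type*} [CommRing R] [IsLocalRing R] (z : Ideal R) [IsLocalRing (R ⧸ z)]

noncomputable def quotientEquiv :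
    AdicCompletion (maximalIdeal R) (R ⧸ z) ≃ₗ[R] Cmpl (R ⧸ z) :=
  AdicCompletion.equivOfMapEq (map_maximalIdeal_of_surjective _ Ideal.Quotient.mk_surjective)

noncomputable def mapQuotient : Cmpl R →+* Cmpl (R ⧸ z) where
  toFun x := quotientEquiv z (AdicCompletion.map (maximalIdeal R) z.mkQ x)
  map_one' := rfl
  map_mul' x y := by
    induction x using AdicCompletion.induction_on
    induction y using AdicCompletion.induction_on
    rfl
  map_zero' := by simp
  map_add' x y := by simp

theorem mapQuotient_comp_algebraMap :
    (mapQuotient z).comp (algebraMap R (Cmpl R)) =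
      (algebraMap (R ⧸ z) (Cmpl (R ⧸ z))).comp (Ideal.Quotient.mk z) :=
  RingHom.ext fun _ => AdicCompletion.ext fun _ => rfl

theorem mapQuotient_surjective : Function.Surjective (mapQuotient z) :=
  (quotientEquiv z).surjective.comp
    (AdicCompletion.map_surjective _ (Submodule.mkQ_surjective z))

theorem ker_mapQuotient [IsNoetherianRing R] :
    RingHom.ker (mapQuotient z) = z.map (algebraMap R (Cmpl R)) := by
  refine le_antisymm (fun x hx => ?_) (Ideal.map_le_iff_le_comap.mpr fun r hr => ?_)
  · exact AdicCompletion.mem_map_algebraMap_of_map_mkQ_eq_zero _ z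
      ((quotientEquiv z).map_eq_zero_iff.mp hx)
  · rw [Ideal.mem_comap, RingHom.mem_ker, ← RingHom.comp_apply, mapQuotient_comp_algebraMap,
      RingHom.comp_apply, Ideal.Quotient.eq_zero_iff_mem.mpr hr, map_zero]

end Cmpl

theorem qacogd_quotient_eq_iInf_minimalPrimes_map {R : Type*} [CommRing R] [IsLocalRing R]
    [IsNoetherianRing R] (z : Ideal R) [IsLocalRing (R ⧸ z)] (I : Ideal R) :
    qacogd (R ⧸ z) (I.map (Ideal.Quotient.mk z)) =
      ⨅ w ∈ (z.map (algebraMap R (Cmpl R))).minimalPrimes,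
        ringKrullDim (Cmpl R ⧸ (I.map (algebraMap R (Cmpl R)) ⊔ w)) := by
  have hsurj := Cmpl.mapQuotient_surjective z
  have hmin : (z.map (algebraMap R (Cmpl R))).minimalPrimes =
      Ideal.comap (Cmpl.mapQuotient z) '' minimalPrimes (Cmpl (R ⧸ z)) := by
    rw [← Cmpl.ker_mapQuotient, RingHom.ker_eq_comap_bot]
    exact Ideal.comap_minimalPrimes_eq_of_surjective hsurj ⊥
  have hI : (I.map (Ideal.Quotient.mk z)).map (algebraMap (R ⧸ z) (Cmpl (R ⧸ z))) =
      (I.map (algebraMap R (Cmpl R))).map (Cmpl.mapQuotient z) := by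
    rw [Ideal.map_map, Ideal.map_map, Cmpl.mapQuotient_comp_algebraMap]
  rw [qacogd, hmin, iInf_image]
  refine iInf_congr fun w => iInf_congr fun _ => ?_
  rw [hI, ← ringKrullDim_quotient_comap_of_surjective hsurj,
    Ideal.comap_map_sup_of_surjective hsurj]

/-- `qacogd I = min {qacogd ((I+z)/z) : z a minimal prime of R}`. -/
theorem qacogd_eq_iInf_quotient (R : Type*) [CommRing R] [IsLocalRing R] [IsNoetherianRing R]
    (I : Ideal R) :
    qacogd R I = ⨅ z, ⨅ h : z ∈ minimalPrimes R,
      letI : Nontrivial (R ⧸ z) := Ideal.Quotient.nontrivial_iff.mpr h.1.1.ne_top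
      letI : IsLocalRing (R ⧸ z) :=
        IsLocalRing.of_surjective' (Ideal.Quotient.mk z) Ideal.Quotient.mk_surjective
      qacogd (R ⧸ z) (Ideal.map (Ideal.Quotient.mk z) I) := by
  rw [qacogd, minimalPrimes_eq_iUnion_minimalPrimes_map R (Cmpl R), iInf_iUnion]
  refine iInf_congr fun z => ?_
  rw [iInf_iUnion]
  refine iInf_congr fun h => ?_
  have : Nontrivial (R ⧸ z) := Ideal.Quotient.nontrivial_iff.mpr h.1.1.ne_top
  have : IsLocalRing (R ⧸ z) := .of_surjective' _ Ideal.Quotient.mk_surjective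
  exact (qacogd_quotient_eq_iInf_minimalPrimes_map z I).symm
end
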